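/- Let f ∈ ℂ[x,y,z] be a homogeneous polynomial of degree d > 1. Then the Jacobian ideal J_f coincides, as a ℂ-linear subspace of ℂ[x,y,z], with E_f + f·ℂ[x,y,z]; that is, every element of J_f can be written as f_x(∂R/∂y − ∂Q/∂z) + f_y(∂P/∂z − ∂R/∂x) + f_z(∂Q/∂x − ∂P/∂y) + f·h for some P, Q, R, h ∈ ℂ[x,y,z], and conversely every such element lies in J_f. -/

import Mathlib

/-!
Write `n` for the number of variables and `fᵢ = ∂ᵢf`. For `a` homogeneous of degree `m`, the
generators `fᵢ ∂ⱼg - fⱼ ∂ᵢg` of `E_f` with `g = xⱼ a`, summed over `j`, give by Euler's identity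
for `a` and for `f`
`∑ⱼ (fᵢ ∂ⱼ(xⱼ a) - fⱼ ∂ᵢ(xⱼ a)) = (n + m - 1) a fᵢ - d f ∂ᵢa`,
so `a fᵢ ∈ E_f + f S` in characteristic zero once `n ≥ 2`. Conversely `E_f ⊆ J_f` is clear, and
`f = d⁻¹ ∑ xᵢ fᵢ ∈ J_f` by Euler's identity again.
-/

open MvPolynomial

namespace MvPolynomial

variable {σ R : Type*} [CommRing R]

lemma sum_pderiv_wedge_X_mul [Fintype σ] {f a : MvPolynomial σ R} {d m : ℕ}
    (hf : f.IsHomogeneous d) (ha : a.IsHomogeneous m) (i : σ) :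
    ∑ j, (pderiv i f * pderiv j (X j * a) - pderiv j f * pderiv i (X j * a)) =
      ((Fintype.card σ + m : R) - 1) • (a * pderiv i f) - (d : R) • (f * pderiv i a) := by
  classical
  have euler_a : ∑ j, pderiv i f * (X j * pderiv j a) = pderiv i f * (m • a) := by
    rw [← ha.sum_X_mul_pderiv, Finset.mul_sum]
  have euler_f : ∑ j, pderiv j f * (X j * pderiv i a) = (d • f) * pderiv i a := by
    rw [← hf.sum_X_mul_pderiv, Finset.sum_mul]
    exact Finset.sum_congr rfl fun _ _ ↦ by ring
  have diag : ∑ j, pderiv j f * (a * pderiv i (X j)) = a * pderiv i f := by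
    simp [Pi.single_apply, mul_comm]
  simp only [Derivation.leibniz, pderiv_X_self, smul_eq_mul, mul_add, Finset.sum_sub_distrib,
    Finset.sum_add_distrib, Finset.sum_const, Finset.card_univ, euler_a, euler_f, diag]
  simp only [smul_eq_C_mul, nsmul_eq_mul, map_sub, map_add, map_natCast, map_one]
  ring

noncomputable def jacobianIdeal (f : MvPolynomial σ R) : Ideal (MvPolynomial σ R) :=
  Ideal.span (Set.range fun i ↦ pderiv i f)

/-- The subspace `df ∧ d(Ωⁿ⁻²)` under `Ωⁿ ≅ MvPolynomial σ R`: the `(n-2)`-form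
`g ⋀_{k ≠ i, j} dxₖ` contributes `± (fᵢ gⱼ - fⱼ gᵢ)`. -/
noncomputable def dfWedgeExact (f : MvPolynomial σ R) : Submodule R (MvPolynomial σ R) :=
  Submodule.span R {w | ∃ i j g, w = pderiv i f * pderiv j g - pderiv j f * pderiv i g}

lemma pderiv_wedge_mem_dfWedgeExact (f g : MvPolynomial σ R) (i j : σ) :
    pderiv i f * pderiv j g - pderiv j f * pderiv i g ∈ dfWedgeExact f :=
  Submodule.subset_span ⟨i, j, g, rfl⟩

lemma dfWedgeExact_le_jacobianIdeal (f : MvPolynomial σ R) :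
    dfWedgeExact f ≤ (jacobianIdeal f).restrictScalars R := by
  refine Submodule.span_le.mpr ?_
  rintro _ ⟨i, j, g, rfl⟩
  have hmem : ∀ k, pderiv k f ∈ jacobianIdeal f := fun k ↦ Ideal.subset_span ⟨k, rfl⟩
  exact Ideal.sub_mem _ (Ideal.mul_mem_right _ _ (hmem i)) (Ideal.mul_mem_right _ _ (hmem j))

section Field

variable [Fintype σ] {K : Type*} [Field K] [CharZero K]

lemma mem_jacobianIdeal_of_isHomogeneous {f : MvPolynomial σ K} {d : ℕ} (hf : f.IsHomogeneous d)
    (hd : d ≠ 0) : f ∈ jacobianIdeal f := by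
  have hdf : (d : K) • f ∈ jacobianIdeal f := by
    rw [Nat.cast_smul_eq_nsmul, ← hf.sum_X_mul_pderiv]
    exact Ideal.sum_mem _ fun i _ ↦ Ideal.mul_mem_left _ _ (Ideal.subset_span ⟨i, rfl⟩)
  simpa [smul_smul, hd] using
    Submodule.smul_mem ((jacobianIdeal f).restrictScalars K) (d : K)⁻¹ hdf

lemma mul_pderiv_mem_dfWedgeExact_sup {f : MvPolynomial σ K} {d : ℕ} (hf : f.IsHomogeneous d)
    (hσ : 1 < Fintype.card σ) (a : MvPolynomial σ K) (i : σ) :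
    a * pderiv i f ∈ dfWedgeExact f ⊔ (Ideal.span {f}).restrictScalars K := by
  rw [← a.sum_homogeneousComponent, Finset.sum_mul]
  refine Submodule.sum_mem _ fun m _ ↦ ?_
  have hc : (Fintype.card σ + m : K) - 1 ≠ 0 := by
    rw [sub_ne_zero]; exact_mod_cast (by omega : Fintype.card σ + m ≠ 1)
  have key := sum_pderiv_wedge_X_mul hf (homogeneousComponent_isHomogeneous m a) i
  rw [eq_sub_iff_add_eq, ← inv_smul_eq_iff₀ hc] at key
  rw [← key]
  refine Submodule.smul_mem _ _ (Submodule.add_mem_sup ?_ ?_)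
  · exact Submodule.sum_mem _ fun j _ ↦ pderiv_wedge_mem_dfWedgeExact f _ i j
  · exact Submodule.smul_mem _ _ (Ideal.mul_mem_right _ _ (Ideal.mem_span_singleton_self f))

theorem jacobianIdeal_eq_dfWedgeExact_sup {f : MvPolynomial σ K} {d : ℕ} (hf : f.IsHomogeneous d)
    (hd : d ≠ 0) (hσ : 1 < Fintype.card σ) :
    (jacobianIdeal f).restrictScalars K = dfWedgeExact f ⊔ (Ideal.span {f}).restrictScalars K := by
  refine le_antisymm ?_ (sup_le (dfWedgeExact_le_jacobianIdeal f) ?_)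
  · intro w hw
    obtain ⟨c, rfl⟩ := (Ideal.mem_span_range_iff_exists_fun).mp hw
    exact Submodule.sum_mem _ fun i _ ↦ mul_pderiv_mem_dfWedgeExact_sup hf hσ (c i) i
  · rw [Submodule.restrictScalars_le, Ideal.span_le, Set.singleton_subset_iff]
    exact mem_jacobianIdeal_of_isHomogeneous hf hd

end Field

lemma mem_dfWedgeExact_fin_three_iff {f w : MvPolynomial (Fin 3) R} :
    w ∈ dfWedgeExact f ↔ ∃ P Q S : MvPolynomial (Fin 3) R,
      w = pderiv 0 f * (pderiv 1 S - pderiv 2 Q) + pderiv 1 f * (pderiv 2 P - pderiv 0 S) +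
        pderiv 2 f * (pderiv 0 Q - pderiv 1 P) := by
  constructor
  · intro hw
    induction hw using Submodule.span_induction with
    | mem w hw =>
      obtain ⟨i, j, g, rfl⟩ := hw
      fin_cases i <;> fin_cases j
      exacts [⟨0, 0, 0, by simp⟩, ⟨0, 0, g, by simp; ring⟩, ⟨0, -g, 0, by simp; ring⟩,
        ⟨0, 0, -g, by simp; ring⟩, ⟨0, 0, 0, by simp⟩, ⟨g, 0, 0, by simp; ring⟩,
        ⟨0, g, 0, by simp; ring⟩, ⟨-g, 0, 0, by simp; ring⟩, ⟨0, 0, 0, by simp⟩]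
    | zero => exact ⟨0, 0, 0, by simp⟩
    | add _ _ _ _ h₁ h₂ =>
      obtain ⟨P₁, Q₁, S₁, rfl⟩ := h₁
      obtain ⟨P₂, Q₂, S₂, rfl⟩ := h₂
      exact ⟨P₁ + P₂, Q₁ + Q₂, S₁ + S₂, by simp only [map_add]; ring⟩
    | smul c _ _ h =>
      obtain ⟨P, Q, S, rfl⟩ := h
      exact ⟨C c * P, C c * Q, C c * S, by simp only [pderiv_C_mul, smul_eq_C_mul]; ring⟩
  · rintro ⟨P, Q, S, rfl⟩
    convert add_mem (add_mem (pderiv_wedge_mem_dfWedgeExact f S 0 1)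
      (pderiv_wedge_mem_dfWedgeExact f Q 2 0)) (pderiv_wedge_mem_dfWedgeExact f P 1 2) using 1
    ring

end MvPolynomial

theorem statement1 (f : MvPolynomial (Fin 3) ℂ) (d : ℕ) (hd : 1 < d)
    (hf : f.IsHomogeneous d) (w : MvPolynomial (Fin 3) ℂ) :
    w ∈ Ideal.span ({pderiv 0 f, pderiv 1 f, pderiv 2 f} : Set (MvPolynomial (Fin 3) ℂ)) ↔
      ∃ P Q R h : MvPolynomial (Fin 3) ℂ,
        w = (pderiv 0 f * (pderiv 1 R - pderiv 2 Q) +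
             pderiv 1 f * (pderiv 2 P - pderiv 0 R) +
             pderiv 2 f * (pderiv 0 Q - pderiv 1 P)) + f * h := by
  have hJ : Ideal.span {pderiv 0 f, pderiv 1 f, pderiv 2 f} = jacobianIdeal f := by
    rw [jacobianIdeal]
    congr 1
    ext
    simp [Fin.exists_fin_succ, eq_comm]
  rw [hJ, ← Submodule.restrictScalars_mem ℂ,
    jacobianIdeal_eq_dfWedgeExact_sup hf (by omega) (by simp), Submodule.mem_sup]
  simp only [mem_dfWedgeExact_fin_three_iff, Submodule.restrictScalars_mem,
    Ideal.mem_span_singleton']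
  constructor
  · rintro ⟨_, ⟨P, Q, R, rfl⟩, _, ⟨h, rfl⟩, rfl⟩
    exact ⟨P, Q, R, h, by ring⟩
  · rintro ⟨P, Q, R, h, rfl⟩
    exact ⟨_, ⟨P, Q, R, rfl⟩, _, ⟨h, rfl⟩, by ring⟩
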